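/- Say that a hereditary class X admits a universal bipartite permutation graph of linear order if there is a constant C such that for every n ≥ 1 there is a bipartite permutation graph with at most C·n vertices that contains every graph of X on at most n vertices as an induced subgraph. Then the class of all star forests does not admit a universal bipartite permutation graph of linear order, but every proper hereditary subclass of the class of star forests does; that is, the class of star forests is a minimal hereditary class not admitting a universal bipartite permutation graph of linear order. -/

import Mathlib

open SimpleGraph

/-- A class of finite graphs, given by a set of graphs on `Fin n` for each `n`. -/
abbrev GClass : Type := ∀ n : ℕ, Set (SimpleGraph (Fin n))

/-- A class is hereditary if it is closed under isomorphism and induced subgraphs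
(i.e. closed under graph embeddings). -/
def Hereditary (X : GClass) : Prop :=
  ∀ (n m : ℕ) (G : SimpleGraph (Fin n)) (H : SimpleGraph (Fin m)),
    G ∈ X n → Nonempty (H ↪g G) → H ∈ X m

/-- A bipartite permutation graph is a letter graph with the path decoder
over some finite alphabet. -/
def IsBPG {V : Type*} [Fintype V] (G : SimpleGraph V) : Prop :=
  ∃ (k : ℕ) (v : Fin (Fintype.card V) ≃ V) (w : Fin (Fintype.card V) → Fin k),
    ∀ i j : Fin (Fintype.card V), i < j →
      (G.Adj (v i) (v j) ↔ (w j : ℕ) = (w i : ℕ) + 1)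

/-- The star `K_{1,p}`, with center `0`. -/
def starGraph (p : ℕ) : SimpleGraph (Fin (p + 1)) :=
  SimpleGraph.fromRel (fun i _ => i = 0)

/-- A star forest: every connected component is a star `K_{1,p}` for some `p ≥ 0`. -/
def IsStarForest {V : Type*} (G : SimpleGraph V) : Prop :=
  ∀ c : G.ConnectedComponent, ∃ p, Nonempty (G.induce c.supp ≃g _root_.starGraph p)

/-- The class of all star forests. -/
def StarForestClass : GClass := fun _ => {G | IsStarForest G}

/-- `X` admits a universal bipartite permutation graph of linear order:
for some constant `C`, for every `n ≥ 1` there is a bipartite permutation graph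
with at most `C·n` vertices containing every graph of `X` on at most `n`
vertices as an induced subgraph. -/
def LinearUniversal (X : GClass) : Prop :=
  ∃ C : ℕ, ∀ n : ℕ, 1 ≤ n → ∃ (N : ℕ) (H : SimpleGraph (Fin N)),
    N ≤ C * n ∧ IsBPG H ∧
      ∀ m ≤ n, ∀ G : SimpleGraph (Fin m), G ∈ X m → Nonempty (G ↪g H)

/-!
Every star forest is a disjoint union of stars `starUnion p`, and a disjoint union of stars is a
bipartite permutation graph: give the centre of the `i`-th star the letter `3i` and its leaves the
letter `3i + 1`.

Lower bound. In a bipartite permutation graph, a star with `2t - 1` leaves has `t` leaves on one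
side of its centre, all with the same letter, and a letter arises in this way from at most one star
per side. A universal graph on `N` vertices for the star forests on `2^(K+1)` vertices contains,
for each `i < K`, the forest of `2^(K-i)` stars on `2^(i+1)` vertices, so at least `2^(K-i-1)` of
its letters occur `2^i` times or more. Summing `2^i` times the number of such letters over `i`
counts every vertex at most twice, whence `K * 2^(K-1) ≤ 2N`, and `N / 2^(K+1) ≥ K / 8` is
unbounded.

Upper bound. A proper hereditary subclass misses some star forest on `m₀` vertices, so each of its
graphs has fewer than `m₀` stars with at least `m₀` leaves. A graph on at most `n` vertices then
embeds into `m₀ - 1` stars with `n` leaves followed by `n` stars with `m₀` leaves.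
-/

section StarUnion

variable {ι κ V W : Type*}

/-- `⟨i, 0⟩` is the centre of the `i`-th star `K_{1, p i}`. -/
def starUnion (p : ι → ℕ) : SimpleGraph (Σ i, Fin (p i + 1)) where
  Adj x y := x.1 = y.1 ∧ x ≠ y ∧ (x.2 = 0 ∨ y.2 = 0)
  symm := ⟨fun _ _ h => ⟨h.1.symm, h.2.1.symm, h.2.2.symm⟩⟩
  loopless := ⟨fun _ h => h.2.1 rfl⟩

variable {p : ι → ℕ} {q : κ → ℕ}

@[simp]
lemma starUnion_adj {x y : Σ i, Fin (p i + 1)} :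
    (starUnion p).Adj x y ↔ x.1 = y.1 ∧ x ≠ y ∧ (x.2 = 0 ∨ y.2 = 0) := Iff.rfl

lemma starUnion_reachable_iff {x y : Σ i, Fin (p i + 1)} :
    (starUnion p).Reachable x y ↔ x.1 = y.1 := by
  constructor
  · rintro ⟨w⟩
    induction w with
    | nil => rfl
    | cons h _ ih => exact h.1.trans ih
  · intro h
    have to_center : ∀ z : Σ i, Fin (p i + 1), (starUnion p).Reachable z ⟨z.1, 0⟩ := by
      rintro ⟨i, o⟩
      by_cases ho : o = 0
      · subst ho; rfl
      · exact Adj.reachable ⟨rfl, by simpa using ho, Or.inr rfl⟩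
    obtain ⟨i, o⟩ := x
    obtain ⟨j, o'⟩ := y
    obtain rfl : i = j := h
    exact (to_center _).trans (to_center ⟨i, o'⟩).symm

lemma isStarForest_starUnion (p : ι → ℕ) : IsStarForest (starUnion p) := by
  intro c
  obtain ⟨⟨i, o⟩, rfl⟩ := c.exists_rep
  have mem_iff (x : Σ i, Fin (p i + 1)) :
      x ∈ ((starUnion p).connectedComponentMk ⟨i, o⟩).supp ↔ x.1 = i := by
    rw [ConnectedComponent.mem_supp_iff, ConnectedComponent.eq, starUnion_reachable_iff]
  refine ⟨p i, ⟨Iso.symm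
    ⟨((Equiv.subtypeEquivRight mem_iff).trans (Equiv.sigmaSubtype i)).symm, ?_⟩⟩⟩
  intro x y
  change (starUnion p).Adj ⟨i, x⟩ ⟨i, y⟩ ↔ _
  simp [_root_.starGraph]

lemma IsStarForest.of_iso {G : SimpleGraph V} {G' : SimpleGraph W} (h : IsStarForest G)
    (e : G ≃g G') : IsStarForest G' := by
  intro c'
  obtain ⟨c, rfl⟩ := e.connectedComponentEquiv.surjective c'
  obtain ⟨k, ⟨φ⟩⟩ := h c
  exact ⟨k, ⟨(Iso.symm ⟨ConnectedComponent.isoEquivSupp e c, e.map_rel_iff⟩).trans φ⟩⟩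

lemma IsStarForest.exists_iso_starUnion {G : SimpleGraph V} (h : IsStarForest G) :
    ∃ p : G.ConnectedComponent → ℕ, Nonempty (starUnion p ≃g G) := by
  choose p φ using h
  refine ⟨p, ⟨⟨(Equiv.sigmaCongrRight fun c => (φ c).some.toEquiv.symm).trans
    (Equiv.sigmaFiberEquiv G.connectedComponentMk), ?_⟩⟩⟩
  rintro ⟨c, x⟩ ⟨d, y⟩
  change G.Adj ((φ c).some.symm x) ((φ d).some.symm y) ↔ _
  by_cases hcd : c = d
  · subst hcd
    change (G.induce c.supp).Adj ((φ c).some.symm x) ((φ c).some.symm y) ↔ _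
    rw [(φ c).some.symm.map_rel_iff]
    simp [_root_.starGraph]
  · simp only [starUnion_adj, hcd, false_and, iff_false]
    intro hadj
    apply hcd
    rw [← ((φ c).some.symm x).2, ← ((φ d).some.symm y).2]
    exact ConnectedComponent.connectedComponentMk_eq_of_adj hadj

def starUnionEmbedding (β : ι ↪ κ) (hpq : ∀ i, p i ≤ q (β i)) : starUnion p ↪g starUnion q where
  toFun x := ⟨β x.1, Fin.castLE (by simpa using hpq x.1) x.2⟩
  inj' := by
    rintro ⟨i, x⟩ ⟨j, y⟩ h
    simp only [Sigma.mk.injEq] at h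
    obtain rfl := β.injective h.1
    simpa [Fin.ext_iff] using h.2
  map_rel_iff' := by
    rintro ⟨i, x⟩ ⟨j, y⟩
    change (starUnion q).Adj ⟨β i, Fin.castLE _ x⟩ ⟨β j, Fin.castLE _ y⟩ ↔ _
    by_cases hij : i = j
    · subst hij
      simp only [starUnion_adj, ne_eq, Sigma.mk.inj_iff, heq_eq_eq, true_and, Fin.ext_iff,
        Fin.val_castLE, Fin.val_zero]
    · simp [hij, β.injective.eq_iff]

end StarUnion

section LetterGraph

variable {α V W ι : Type*}

def letterGraph [LinearOrder α] (lam : α → ℕ) : SimpleGraph α where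
  Adj x y := (x < y ∧ lam y = lam x + 1) ∨ (y < x ∧ lam x = lam y + 1)
  symm := ⟨fun _ _ h => h.symm⟩
  loopless := ⟨fun _ h => by rcases h with ⟨h, -⟩ | ⟨h, -⟩ <;> exact lt_irrefl _ h⟩

@[simp]
lemma letterGraph_adj [LinearOrder α] {lam : α → ℕ} {x y : α} :
    (letterGraph lam).Adj x y ↔ (x < y ∧ lam y = lam x + 1) ∨ (y < x ∧ lam x = lam y + 1) :=
  Iff.rfl

lemma letterGraph_adj_of_lt [LinearOrder α] {lam : α → ℕ} {x y : α} (h : x < y) :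
    (letterGraph lam).Adj x y ↔ lam y = lam x + 1 := by
  simp [h, h.not_gt]

lemma isBPG_of_letterGraph_iso [Fintype α] [LinearOrder α] [Fintype V] {lam : α → ℕ}
    {G : SimpleGraph V} (e : letterGraph lam ≃g G) : IsBPG G := by
  let v := Fintype.orderIsoFinOfCardEq α (Fintype.card_congr e.toEquiv)
  refine ⟨Finset.univ.sup lam + 1, v.toEquiv.trans e.toEquiv,
    fun i => ⟨lam (v i), Nat.lt_succ_of_le (Finset.le_sup (Finset.mem_univ _))⟩, fun i j hij => ?_⟩
  exact e.map_adj_iff.trans (letterGraph_adj_of_lt (v.lt_iff_lt.2 hij))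

lemma IsBPG.exists_iso_letterGraph [Fintype V] {G : SimpleGraph V} (h : IsBPG G) :
    ∃ lam : Fin (Fintype.card V) → ℕ, Nonempty (letterGraph lam ≃g G) := by
  obtain ⟨k, v, w, hw⟩ := h
  refine ⟨fun i => w i, ⟨⟨v, fun {i j} => ?_⟩⟩⟩
  rcases lt_trichotomy i j with hij | rfl | hij
  · rw [letterGraph_adj_of_lt hij, hw i j hij]
  · simp
  · rw [adj_comm, hw j i hij, adj_comm, letterGraph_adj_of_lt hij]

lemma IsBPG.of_iso [Fintype V] [Fintype W] {G : SimpleGraph V} {G' : SimpleGraph W}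
    (h : IsBPG G) (e : G ≃g G') : IsBPG G' := by
  obtain ⟨lam, ⟨f⟩⟩ := h.exists_iso_letterGraph
  exact isBPG_of_letterGraph_iso (f.trans e)

lemma letterGraph_adj_iff_of_succ_imp_lt [LinearOrder α] {lam : α → ℕ}
    (h : ∀ x y, lam y = lam x + 1 → x < y) {x y : α} :
    (letterGraph lam).Adj x y ↔ lam y = lam x + 1 ∨ lam x = lam y + 1 := by
  constructor
  · rintro (⟨-, hxy⟩ | ⟨-, hyx⟩)
    exacts [Or.inl hxy, Or.inr hyx]
  · rintro (hxy | hyx)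
    exacts [Or.inl ⟨h x y hxy, hxy⟩, Or.inr ⟨h y x hyx, hyx⟩]

/-- The gap of `3` between stars ensures that consecutive letters only occur within one star. -/
def starLetter (idx : ι ↪ ℕ) {p : ι → ℕ} (x : Σ i, Fin (p i + 1)) : ℕ :=
  3 * idx x.1 + if x.2 = 0 then 0 else 1

lemma starLetter_eq_succ_iff (idx : ι ↪ ℕ) {p : ι → ℕ} {x y : Σ i, Fin (p i + 1)} :
    starLetter idx y = starLetter idx x + 1 ↔ x.1 = y.1 ∧ x.2 = 0 ∧ y.2 ≠ 0 := by
  obtain ⟨i, x⟩ := x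
  obtain ⟨j, y⟩ := y
  by_cases hij : i = j
  · subst hij
    simp only [starLetter]
    split_ifs <;> simp_all; omega
  · have hidx : idx i ≠ idx j := idx.injective.ne hij
    simp only [starLetter, hij, false_and, iff_false]
    split_ifs <;> omega

def starUnionIsoLetterGraph [LinearOrder ι] (idx : ι ↪ ℕ) (p : ι → ℕ) :
    starUnion p ≃g letterGraph (fun x : Σₗ i, Fin (p i + 1) => starLetter idx (ofLex x)) where
  toEquiv := toLex
  map_rel_iff' := by
    intro x y
    have succ_imp_lt (x y : Σ i, Fin (p i + 1)) :
        starLetter idx y = starLetter idx x + 1 → toLex x < toLex y := by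
      rw [starLetter_eq_succ_iff]
      obtain ⟨i, x⟩ := x
      obtain ⟨j, y⟩ := y
      rintro ⟨rfl, hx, hy⟩
      refine Sigma.Lex.right _ _ ?_
      rw [show x = 0 from hx]
      exact Fin.pos_iff_ne_zero.2 hy
    change (letterGraph _).Adj (toLex x) (toLex y) ↔ _
    rw [letterGraph_adj_iff_of_succ_imp_lt fun x y => succ_imp_lt (ofLex x) (ofLex y),
      ofLex_toLex, ofLex_toLex,
      starLetter_eq_succ_iff, starLetter_eq_succ_iff]
    obtain ⟨i, x⟩ := x
    obtain ⟨j, y⟩ := y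
    by_cases hij : i = j
    · subst hij
      by_cases hx : x = 0 <;> by_cases hy : y = 0 <;> simp_all [eq_comm]
    · simp [hij, Ne.symm hij]

lemma isBPG_starUnion [Fintype ι] (p : ι → ℕ) : IsBPG (starUnion p) := by
  let idx : ι ↪ ℕ := (Fintype.equivFin ι).toEmbedding.trans Fin.valEmbedding
  let : LinearOrder ι := LinearOrder.lift' idx idx.injective
  exact isBPG_of_letterGraph_iso (starUnionIsoLetterGraph idx p).symm

end LetterGraph

section Counting

open Finset

variable {α ι : Type*} [LinearOrder α] {lam : α → ℕ}

lemma letterGraph_lt_of_not_adj {x y : α} (hne : x ≠ y) (hadj : ¬ (letterGraph lam).Adj x y)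
    (h : lam y = lam x + 1) : y < x :=
  (lt_or_gt_of_ne hne).resolve_left fun hxy => hadj (Or.inl ⟨hxy, h⟩)

def frequentLetters [Fintype α] (lam : α → ℕ) (t : ℕ) : Finset ℕ :=
  {j ∈ univ.image lam | t ≤ #{x | lam x = j}}

namespace StarUnion

variable {p : ι → ℕ}

section

variable {V : Type*} {G : SimpleGraph V} {f : starUnion p ↪g G}

lemma adj_center {s : ι} {o : Fin (p s + 1)} (ho : o ≠ 0) : G.Adj (f ⟨s, o⟩) (f ⟨s, 0⟩) :=
  f.map_adj_iff.2 ⟨rfl, by simpa using ho, Or.inr rfl⟩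

lemma not_adj_of_fst_ne {s s' : ι} (hs : s ≠ s') (o : Fin (p s + 1)) (o' : Fin (p s' + 1)) :
    ¬ G.Adj (f ⟨s, o⟩) (f ⟨s', o'⟩) := by
  rw [f.map_adj_iff]
  exact fun h => hs h.1

lemma apply_ne_of_fst_ne {s s' : ι} (hs : s ≠ s') (o : Fin (p s + 1)) (o' : Fin (p s' + 1)) :
    f ⟨s, o⟩ ≠ f ⟨s', o'⟩ :=
  f.injective.ne fun h => hs (congrArg Sigma.fst h)

end

variable (f : starUnion p ↪g letterGraph lam)

def leavesBefore (s : ι) : Finset (Fin (p s + 1)) := {o | o ≠ 0 ∧ f ⟨s, o⟩ < f ⟨s, 0⟩}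

def leavesAfter (s : ι) : Finset (Fin (p s + 1)) := {o | o ≠ 0 ∧ f ⟨s, 0⟩ < f ⟨s, o⟩}

variable {f}

lemma letter_of_mem_leavesBefore {s : ι} {o : Fin (p s + 1)} (ho : o ∈ leavesBefore f s) :
    lam (f ⟨s, 0⟩) = lam (f ⟨s, o⟩) + 1 := by
  simp only [leavesBefore, mem_filter, mem_univ, true_and] at ho
  rcases adj_center (f := f) ho.1 with ⟨-, h⟩ | ⟨h, -⟩
  exacts [h, absurd ho.2 h.not_gt]

lemma letter_of_mem_leavesAfter {s : ι} {o : Fin (p s + 1)} (ho : o ∈ leavesAfter f s) :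
    lam (f ⟨s, o⟩) = lam (f ⟨s, 0⟩) + 1 := by
  simp only [leavesAfter, mem_filter, mem_univ, true_and] at ho
  rcases adj_center (f := f) ho.1 with ⟨h, -⟩ | ⟨-, h⟩
  exacts [absurd ho.2 h.not_gt, h]

lemma le_card_leavesBefore_add_card_leavesAfter (s : ι) :
    p s ≤ #(leavesBefore f s) + #(leavesAfter f s) := by
  have hsub : univ.erase 0 ⊆ leavesBefore f s ∪ leavesAfter f s := by
    intro o ho
    have ho : o ≠ 0 := ne_of_mem_erase ho
    have hne : f ⟨s, o⟩ ≠ f ⟨s, 0⟩ := f.injective.ne (by simpa using ho)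
    rcases lt_or_gt_of_ne hne with h | h
    · exact mem_union_left _ (by simp [leavesBefore, ho, h])
    · exact mem_union_right _ (by simp [leavesAfter, ho, h])
  calc p s = #(univ.erase (0 : Fin (p s + 1))) := by simp
    _ ≤ _ := (card_le_card hsub).trans (card_union_le _ _)

/-- A leaf before its centre that is not adjacent to the other centre must lie after that centre,
which orders the two centres both ways. -/
lemma eq_of_mem_leavesBefore {s s' : ι} {o : Fin (p s + 1)} {o' : Fin (p s' + 1)}
    (ho : o ∈ leavesBefore f s) (ho' : o' ∈ leavesBefore f s')
    (h : lam (f ⟨s, 0⟩) = lam (f ⟨s', 0⟩)) : s = s' := by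
  by_contra hs
  have hb : f ⟨s', 0⟩ < f ⟨s, o⟩ := letterGraph_lt_of_not_adj (apply_ne_of_fst_ne hs _ _)
    (not_adj_of_fst_ne hs _ _) (by rw [← h, letter_of_mem_leavesBefore ho])
  have hb' : f ⟨s, 0⟩ < f ⟨s', o'⟩ :=
    letterGraph_lt_of_not_adj (apply_ne_of_fst_ne (Ne.symm hs) _ _)
    (not_adj_of_fst_ne (Ne.symm hs) _ _) (by rw [h, letter_of_mem_leavesBefore ho'])
  simp only [leavesBefore, mem_filter, mem_univ, true_and] at ho ho'
  exact lt_asymm (hb.trans ho.2) (hb'.trans ho'.2)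

lemma eq_of_mem_leavesAfter {s s' : ι} {o : Fin (p s + 1)} {o' : Fin (p s' + 1)}
    (ho : o ∈ leavesAfter f s) (ho' : o' ∈ leavesAfter f s')
    (h : lam (f ⟨s, 0⟩) = lam (f ⟨s', 0⟩)) : s = s' := by
  by_contra hs
  have hb : f ⟨s, o⟩ < f ⟨s', 0⟩ :=
    letterGraph_lt_of_not_adj (apply_ne_of_fst_ne (Ne.symm hs) _ _)
    (not_adj_of_fst_ne (Ne.symm hs) _ _) (by rw [← h, letter_of_mem_leavesAfter ho])
  have hb' : f ⟨s', o'⟩ < f ⟨s, 0⟩ := letterGraph_lt_of_not_adj (apply_ne_of_fst_ne hs _ _)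
    (not_adj_of_fst_ne hs _ _) (by rw [h, letter_of_mem_leavesAfter ho'])
  simp only [leavesAfter, mem_filter, mem_univ, true_and] at ho ho'
  exact lt_asymm (ho.2.trans hb) (ho'.2.trans hb')

variable [Fintype α] {t : ℕ}

lemma card_le_card_letter_fiber {s : ι} {S : Finset (Fin (p s + 1))} {j : ℕ}
    (hS : ∀ o ∈ S, lam (f ⟨s, o⟩) = j) : #S ≤ #{x | lam x = j} :=
  card_le_card_of_injOn (fun o => f ⟨s, o⟩) (fun o ho => by simpa using hS o ho)
    fun o _ o' _ h => by simpa using f.injective h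

lemma mem_frequentLetters_of_forall_eq {s : ι} {S : Finset (Fin (p s + 1))} {j : ℕ} (ht : 0 < t)
    (hS : t ≤ #S) (hj : ∀ o ∈ S, lam (f ⟨s, o⟩) = j) : j ∈ frequentLetters lam t := by
  obtain ⟨o, ho⟩ := card_pos.1 (ht.trans_le hS)
  simp only [frequentLetters, mem_filter, mem_image, mem_univ, true_and]
  exact ⟨⟨_, hj o ho⟩, hS.trans (card_le_card_letter_fiber hj)⟩

lemma card_manyLeavesBefore_le [Fintype ι] (ht : 0 < t) :
    #{s | t ≤ #(leavesBefore f s)} ≤ #(frequentLetters lam t) := by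
  refine card_le_card_of_injOn (fun s => lam (f ⟨s, 0⟩) - 1) (fun s hs => ?_)
    fun s hs s' hs' h => ?_
  · simp only [coe_filter, mem_univ, true_and, Set.mem_ofPred_eq] at hs
    exact mem_frequentLetters_of_forall_eq (f := f) ht hs fun o ho => by
      have := letter_of_mem_leavesBefore ho; dsimp only; omega
  · simp only [coe_filter, mem_univ, true_and, Set.mem_ofPred_eq] at hs hs'
    obtain ⟨o, ho⟩ := card_pos.1 (ht.trans_le hs)
    obtain ⟨o', ho'⟩ := card_pos.1 (ht.trans_le hs')
    have := letter_of_mem_leavesBefore ho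
    have := letter_of_mem_leavesBefore ho'
    exact eq_of_mem_leavesBefore ho ho' (by simp only at h; omega)

lemma card_manyLeavesAfter_le [Fintype ι] (ht : 0 < t) :
    #{s | t ≤ #(leavesAfter f s)} ≤ #(frequentLetters lam t) := by
  refine card_le_card_of_injOn (fun s => lam (f ⟨s, 0⟩) + 1) (fun s hs => ?_)
    fun s hs s' hs' h => ?_
  · simp only [coe_filter, mem_univ, true_and, Set.mem_ofPred_eq] at hs
    exact mem_frequentLetters_of_forall_eq ht hs fun o ho => letter_of_mem_leavesAfter ho
  · simp only [coe_filter, mem_univ, true_and, Set.mem_ofPred_eq] at hs hs'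
    obtain ⟨o, ho⟩ := card_pos.1 (ht.trans_le hs)
    obtain ⟨o', ho'⟩ := card_pos.1 (ht.trans_le hs')
    exact eq_of_mem_leavesAfter ho ho' (by simpa using h)

end StarUnion

variable [Fintype α] {p : ι → ℕ} {t : ℕ}

open StarUnion in
theorem card_le_two_mul_card_frequentLetters [Fintype ι] (f : starUnion p ↪g letterGraph lam)
    (ht : 0 < t) (hp : ∀ s, 2 * t ≤ p s + 1) : Fintype.card ι ≤ 2 * #(frequentLetters lam t) := by
  have few_before_sub : ({s | ¬ t ≤ #(leavesBefore f s)} : Finset ι) ⊆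
      ({s | t ≤ #(leavesAfter f s)} : Finset ι) := by
    intro s hs
    simp only [mem_filter, mem_univ, true_and] at hs ⊢
    have := le_card_leavesBefore_add_card_leavesAfter (f := f) s
    have := hp s
    omega
  rw [← card_univ, ← card_filter_add_card_filter_not (fun s => t ≤ #(leavesBefore f s))]
  have := card_manyLeavesBefore_le (f := f) ht
  have := (card_le_card few_before_sub).trans (card_manyLeavesAfter_le (f := f) ht)
  omega

end Counting

section LowerBound

open Finset

variable {α ι V : Type*}

lemma sum_filter_two_pow_le (s : Finset ℕ) (F : ℕ) : ∑ i ∈ s with 2 ^ i ≤ F, 2 ^ i ≤ 2 * F := by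
  rcases eq_or_ne F 0 with rfl | hF
  · simp
  refine le_of_lt ?_
  calc ∑ i ∈ s with 2 ^ i ≤ F, 2 ^ i < 2 ^ (Nat.log 2 F + 1) := by
        refine Nat.geomSum_lt le_rfl fun k hk => ?_
        have hk : 2 ^ k ≤ F := (mem_filter.1 hk).2
        exact (Nat.pow_lt_pow_iff_right (by norm_num)).1 (hk.trans_lt (Nat.lt_pow_succ_log_self
          (by norm_num) F))
    _ ≤ 2 * F := by rw [pow_succ, mul_comm]; exact Nat.mul_le_mul_left 2 (Nat.pow_log_le_self 2 hF)

lemma sum_two_pow_mul_card_frequentLetters_le [Fintype α] [LinearOrder α] (lam : α → ℕ)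
    (s : Finset ℕ) : ∑ i ∈ s, 2 ^ i * #(frequentLetters lam (2 ^ i)) ≤ 2 * Fintype.card α := by
  calc ∑ i ∈ s, 2 ^ i * #(frequentLetters lam (2 ^ i))
      = ∑ j ∈ univ.image lam, ∑ i ∈ s with 2 ^ i ≤ #{x | lam x = j}, 2 ^ i := by
        simp only [frequentLetters, card_filter, mul_sum, mul_ite, mul_one, mul_zero]
        rw [sum_comm]
        simp only [sum_filter]
    _ ≤ ∑ j ∈ univ.image lam, 2 * #{x | lam x = j} :=
        sum_le_sum fun j _ => sum_filter_two_pow_le s _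
    _ = 2 * Fintype.card α := by rw [← mul_sum, ← card_eq_sum_card_image, card_univ]

lemma nonempty_starUnion_embedding_of_universal {H : SimpleGraph V} {n : ℕ}
    (huniv : ∀ m ≤ n, ∀ G : SimpleGraph (Fin m), G ∈ StarForestClass m → Nonempty (G ↪g H))
    [Fintype ι] (p : ι → ℕ) (hcard : Fintype.card (Σ i, Fin (p i + 1)) ≤ n) :
    Nonempty (starUnion p ↪g H) := by
  obtain ⟨e⟩ := huniv _ hcard _ ((isStarForest_starUnion p).of_iso ((starUnion p).overFinIso rfl))
  exact ⟨((starUnion p).overFinIso rfl).toEmbedding.trans e⟩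

theorem not_linearUniversal_starForestClass : ¬ LinearUniversal StarForestClass := by
  rintro ⟨C, hC⟩
  set K := 8 * C + 1
  obtain ⟨N, H, hN, hH, huniv⟩ := hC (2 ^ (K + 1)) Nat.one_le_two_pow
  obtain ⟨lam, ⟨e⟩⟩ := hH.exists_iso_letterGraph
  have scale (i : ℕ) (hi : i < K) : 2 ^ K ≤ 2 * (2 ^ i * #(frequentLetters lam (2 ^ i))) := by
    have hK : 2 ^ (K - i) * 2 ^ i = 2 ^ K := pow_sub_mul_pow 2 hi.le
    have hpos := Nat.two_pow_pos i
    have hleaves : 2 * 2 ^ i - 1 + 1 = 2 * 2 ^ i := by omega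
    obtain ⟨f⟩ := nonempty_starUnion_embedding_of_universal huniv
      (fun _ : Fin (2 ^ (K - i)) => 2 * 2 ^ i - 1) <| by
        simp only [Fintype.card_sigma, Fintype.card_fin, hleaves, sum_const, card_univ, smul_eq_mul]
        exact le_of_eq (by rw [pow_succ, ← hK]; ring)
    have := card_le_two_mul_card_frequentLetters (f.trans e.symm.toEmbedding) hpos
      fun _ => by omega
    rw [Fintype.card_fin] at this
    calc 2 ^ K = 2 ^ (K - i) * 2 ^ i := hK.symm
      _ ≤ 2 * #(frequentLetters lam (2 ^ i)) * 2 ^ i := Nat.mul_le_mul_right _ this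
      _ = _ := by ring
  have total := sum_two_pow_mul_card_frequentLetters_le lam (range K)
  have : K * 2 ^ K ≤ 2 * ∑ i ∈ range K, 2 ^ i * #(frequentLetters lam (2 ^ i)) := by
    rw [mul_sum]
    simpa using card_nsmul_le_sum (range K) _ _ fun i hi => scale i (mem_range.1 hi)
  simp only [Fintype.card_fin] at total
  have upper : K * 2 ^ K ≤ 8 * C * 2 ^ K := by rw [pow_succ] at hN; nlinarith
  have lower : 8 * C * 2 ^ K < K * 2 ^ K :=
    Nat.mul_lt_mul_of_pos_right (by omega) (Nat.two_pow_pos K)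
  omega

end LowerBound

section UpperBound

open Finset

variable {ι V : Type*}

lemma card_le_card_sigma_fin [Fintype ι] (p : ι → ℕ) :
    Fintype.card ι ≤ Fintype.card (Σ i, Fin (p i + 1)) :=
  Fintype.card_le_of_injective (fun i => ⟨i, 0⟩) fun _ _ h => congrArg Sigma.fst h

lemma succ_le_card_sigma_fin [Fintype ι] (p : ι → ℕ) (i : ι) :
    p i + 1 ≤ Fintype.card (Σ i, Fin (p i + 1)) := by
  simpa using Fintype.card_le_of_injective (Sigma.mk (β := fun i => Fin (p i + 1)) i)
    sigma_mk_injective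

lemma IsStarForest.nonempty_embedding_starUnion [Fintype V] {F : SimpleGraph V}
    (hF : IsStarForest F) [Fintype ι] {p : ι → ℕ}
    (h : Fintype.card V ≤ #{i | Fintype.card V ≤ p i}) : Nonempty (F ↪g starUnion p) := by
  classical
  obtain ⟨pF, ⟨eF⟩⟩ := hF.exists_iso_starUnion
  have hV : Fintype.card (Σ c, Fin (pF c + 1)) = Fintype.card V := Fintype.card_congr eF.toEquiv
  obtain ⟨β⟩ : Nonempty (F.ConnectedComponent ↪ {i // Fintype.card V ≤ p i}) :=
    Function.Embedding.nonempty_of_card_le <| by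
      rw [Fintype.card_subtype]
      exact (hV ▸ card_le_card_sigma_fin pF).trans h
  refine ⟨eF.symm.toEmbedding.trans
    (starUnionEmbedding (β.trans (Function.Embedding.subtype _)) fun c => ?_)⟩
  have := hV ▸ succ_le_card_sigma_fin pF c
  have := (β c).2
  simp only [Function.Embedding.trans_apply, Function.Embedding.subtype_apply]
  omega

lemma Hereditary.card_filter_le_lt_of_notMem {Y : GClass} (hY : Hereditary Y) {m₀ m : ℕ}
    {F : SimpleGraph (Fin m₀)} (hF : IsStarForest F) (hFY : F ∉ Y m₀) {G : SimpleGraph (Fin m)}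
    (hG : G ∈ Y m) [Fintype ι] {p : ι → ℕ} (e : starUnion p ≃g G) : #{i | m₀ ≤ p i} < m₀ := by
  by_contra! h
  obtain ⟨f⟩ := hF.nonempty_embedding_starUnion (p := p) (by simpa using h)
  exact hFY (hY m m₀ G F hG ⟨f.trans e.toEmbedding⟩)

lemma nonempty_starUnion_embedding_sumElim [Fintype ι] {p : ι → ℕ} {a b k l : ℕ}
    (hbig : #{i | l ≤ p i} ≤ a) (hcard : Fintype.card ι ≤ b) (hp : ∀ i, p i ≤ k) :
    Nonempty (starUnion p ↪g starUnion (Sum.elim (fun _ : Fin a => k) (fun _ : Fin b => l))) := by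
  classical
  obtain ⟨eBig⟩ : Nonempty ({i // l ≤ p i} ↪ Fin a) :=
    Function.Embedding.nonempty_of_card_le (by simpa [Fintype.card_subtype] using hbig)
  obtain ⟨eSmall⟩ : Nonempty ({i // ¬ l ≤ p i} ↪ Fin b) :=
    Function.Embedding.nonempty_of_card_le (by simpa using (Fintype.card_subtype_le _).trans hcard)
  refine ⟨starUnionEmbedding ((Equiv.sumCompl _).symm.toEmbedding.trans (eBig.sumMap eSmall))
    fun i => ?_⟩
  by_cases hi : l ≤ p i
  · simp [Equiv.sumCompl_symm_apply_of_pos (p := fun j => l ≤ p j) hi, hp]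
  · simp [Equiv.sumCompl_symm_apply_of_neg (p := fun j => l ≤ p j) hi]
    omega

theorem linearUniversal_of_ne_starForestClass (Y : GClass) (hY : Hereditary Y)
    (hsub : ∀ n, Y n ⊆ StarForestClass n) (hne : Y ≠ StarForestClass) : LinearUniversal Y := by
  classical
  obtain ⟨m₀, F, hF, hFY⟩ : ∃ (m₀ : ℕ) (F : SimpleGraph (Fin m₀)), IsStarForest F ∧ F ∉ Y m₀ := by
    by_contra! h
    exact hne (funext fun n => (hsub n).antisymm fun F hF => h n F hF)
  refine ⟨3 * m₀ + 1, fun n hn => ?_⟩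
  let U := starUnion (Sum.elim (fun _ : Fin (m₀ - 1) => n) (fun _ : Fin n => m₀))
  refine ⟨_, U.overFin rfl, ?_, (isBPG_starUnion _).of_iso (U.overFinIso rfl),
    fun m hm G hG => ?_⟩
  · simp only [Fintype.card_sigma, Fintype.sum_sum_type, Sum.elim_inl, Sum.elim_inr, sum_const,
      card_univ, Fintype.card_fin, smul_eq_mul]
    have : (m₀ - 1) * (n + 1) ≤ m₀ * (n + 1) := Nat.mul_le_mul_right _ (Nat.sub_le m₀ 1)
    nlinarith
  · obtain ⟨p, ⟨e⟩⟩ := (hsub m hG).exists_iso_starUnion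
    have hcard : Fintype.card (Σ c, Fin (p c + 1)) = m := by simpa using Fintype.card_congr e.toEquiv
    obtain ⟨f⟩ := nonempty_starUnion_embedding_sumElim (k := n)
      (Nat.le_sub_one_of_lt (hY.card_filter_le_lt_of_notMem hF hFY hG e))
      (hcard ▸ card_le_card_sigma_fin p |>.trans hm)
      fun c => by have := hcard ▸ succ_le_card_sigma_fin p c; omega
    exact ⟨e.symm.toEmbedding.trans (f.trans (U.overFinIso rfl).toEmbedding)⟩

end UpperBound

/-- The class of star forests is a minimal hereditary class not admitting a
universal bipartite permutation graph of linear order. -/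
theorem star_forests_minimal_no_linear_universal :
    ¬ LinearUniversal StarForestClass ∧
      ∀ Y : GClass, Hereditary Y → (∀ n, Y n ⊆ StarForestClass n) →
        Y ≠ StarForestClass → LinearUniversal Y :=
  ⟨not_linearUniversal_starForestClass, linearUniversal_of_ne_starForestClass⟩
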